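/- Let μ be an abelian group and τ an endomorphism of μ such that μ → μ, y ↦ y/τ^d(y) is surjective for all d ≥ 1. Let n = md and consider μ^n with the shift-then-τ action: (τ·Ad σ^m)(y_1,...,y_n) = (τ(y_{1+m}), ..., τ(y_{n+m})) (indices mod n). Then for every u ∈ μ^n there exists y ∈ μ^n with u = y · ((τ·Ad σ^m)(y))^{-1}; i.e., the twisted coboundary map y ↦ y · (τ∘shift^m)(y)^{-1} on μ^n is surjective. -/
import Mathlib


/-- (4.4, Lemma 1 abstracted): let `μ` be an abelian group and `τ` an
endomorphism such that `y ↦ y / τ^d(y)` is surjective for every `d ≥ 1`. With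
`n = m·d`, the twisted coboundary map `y ↦ (y_i / τ(y_{i+m}))_i` on `μ^n`
(indices mod `n`) is surjective. -/
theorem stmt_14 (μ : Type*) [CommGroup μ] (τ : Monoid.End μ)
    (hτ : ∀ d : ℕ, 1 ≤ d → ∀ x : μ, ∃ y : μ, x = y / (τ ^ d) y)
    (m d n : ℕ) (hm : 1 ≤ m) (hd : 1 ≤ d) (hn : n = m * d)
    (u : ZMod n → μ) :
    ∃ y : ZMod n → μ, ∀ i : ZMod n, u i = y i / τ (y (i + (m : ZMod n))) := by
  haveI : NeZero n := ⟨by simp [hn]; omega⟩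
  set U : ℕ → μ := fun r => ∏ j ∈ Finset.range d, (τ ^ j) (u ((r + j * m : ℕ) : ZMod n)) with hU
  choose z hz using fun r : ℕ => hτ d hd (U r)
  have hz' : ∀ r, z r = U r * (τ ^ d) (z r) := by
    intro r; rw [hz r, div_mul_cancel]
  refine ⟨fun i => (∏ j ∈ Finset.Ico (i.val / m) d,
      (τ ^ (j - i.val / m)) (u ((i.val % m + j * m : ℕ) : ZMod n)))
      * (τ ^ (d - i.val / m)) (z (i.val % m)), ?_⟩
  intro i
  simp only []
  set k := i.val / m with hk
  set r := i.val % m with hr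
  have hmk : m * k + r = i.val := Nat.div_add_mod i.val m
  have hvn : i.val < m * d := hn ▸ ZMod.val_lt i
  have hkd : k < d := (Nat.div_lt_iff_lt_mul (by omega)).mpr (Nat.mul_comm m d ▸ hvn)
  have hrm : r < m := Nat.mod_lt _ (by omega)
  have hicast : i = ((r + k * m : ℕ) : ZMod n) := by
    have h1 : (r + k * m : ℕ) = i.val := by rw [Nat.mul_comm]; omega
    rw [h1, ZMod.natCast_val, ZMod.cast_id]
  -- key: τ applied to τ^a is τ^(a+1)
  have hτpow : ∀ (a : ℕ) (x : μ), τ ((τ ^ a) x) = (τ ^ (a + 1)) x := by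
    intro a x
    rw [pow_succ']
    rfl
  rw [eq_div_iff_mul_eq']
  rcases Nat.lt_or_ge (k + 1) d with hcase | hcase
  · -- inner case: (i+m).val = i.val + m, decomposition (r, k+1)
    have h2 : (i + (m : ZMod n)) = ((i.val + m : ℕ) : ZMod n) := by
      push_cast
      rw [ZMod.natCast_val, ZMod.cast_id]
    have h3 : i.val + m < n := by
      have e1 : m * (k+1) = m*k + m := Nat.mul_succ m k
      have e2 : m * (k+2) = m*(k+1) + m := Nat.mul_succ m (k+1)
      have e3 : m * (k+2) ≤ m * d := Nat.mul_le_mul_left m (by omega)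
      omega
    have h4 : ((i.val + m : ℕ) : ZMod n).val = i.val + m := ZMod.val_cast_of_lt h3
    rw [h2, h4]
    have h5 : (i.val + m) / m = k + 1 := by
      rw [Nat.add_div_right _ (by omega)]
    have h6 : (i.val + m) % m = r := by
      rw [Nat.add_mod_right]
    rw [h5, h6]
    rw [map_mul, map_prod, hτpow]
    have h7 : ∀ j ∈ Finset.Ico (k + 1) d,
        τ ((τ ^ (j - (k + 1))) (u ((r + j * m : ℕ) : ZMod n)))
        = (τ ^ (j - k)) (u ((r + j * m : ℕ) : ZMod n)) := by
      intro j hj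
      rw [Finset.mem_Ico] at hj
      have hjk : j - (k + 1) + 1 = j - k := by omega
      rw [hτpow, hjk]
    rw [Finset.prod_congr rfl h7]
    have h8 : d - (k + 1) + 1 = d - k := by omega
    rw [h8]
    rw [Finset.prod_eq_prod_Ico_succ_bot hkd]
    have h9 : (τ ^ (k - k)) (u ((r + k * m : ℕ) : ZMod n)) = u i := by
      rw [Nat.sub_self, pow_zero, hicast]; rfl
    rw [h9, mul_assoc]
  · -- wrap-around case: k = d - 1, i + m = r
    have hk1 : k + 1 = d := by omega
    have h2 : (i + (m : ZMod n)) = ((r : ℕ) : ZMod n) := by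
      have : ((r + d * m : ℕ) : ZMod n) = ((r : ℕ) : ZMod n) := by
        push_cast
        rw [show ((d : ZMod n) * m = 0) by
          rw [← Nat.cast_mul, show d * m = n by rw [Nat.mul_comm]; omega, ZMod.natCast_self]]
        ring
      calc i + (m : ZMod n) = ((r + k * m : ℕ) : ZMod n) + ((m : ℕ) : ZMod n) := by rw [← hicast]
        _ = ((r + d * m : ℕ) : ZMod n) := by push_cast; rw [show (d : ZMod n) = (k : ZMod n) + 1 by rw [← hk1]; push_cast; ring]; ring
        _ = ((r : ℕ) : ZMod n) := this
    have h4 : ((r : ℕ) : ZMod n).val = r := ZMod.val_cast_of_lt (by omega)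
    rw [h2, h4]
    have h5 : r / m = 0 := Nat.div_eq_of_lt hrm
    have h6 : r % m = r := Nat.mod_eq_of_lt hrm
    rw [h5, h6, Nat.sub_zero]
    have h7 : (∏ j ∈ Finset.Ico 0 d, (τ ^ (j - 0)) (u ((r + j * m : ℕ) : ZMod n)))
        * (τ ^ d) (z r) = z r := by
      have e : (∏ j ∈ Finset.Ico 0 d, (τ ^ (j - 0)) (u ((r + j * m : ℕ) : ZMod n))) = U r := by
        rw [hU]
        simp only [Finset.range_eq_Ico, Nat.sub_zero]
      rw [e, ← hz' r]
    rw [h7]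
    rw [Finset.prod_eq_prod_Ico_succ_bot hkd]
    have h9 : (τ ^ (k - k)) (u ((r + k * m : ℕ) : ZMod n)) = u i := by
      rw [Nat.sub_self, pow_zero, hicast]; rfl
    have h10 : Finset.Ico (k + 1) d = ∅ := by rw [hk1]; exact Finset.Ico_self d
    have h11 : d - k = 1 := by omega
    rw [h9, h10, Finset.prod_empty, mul_one, h11, pow_one]
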